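/- For every α > 0 there exists a constant C_α ∈ (0,∞) such that for every p ∈ [1,∞), every probability space (Ω,μ) and all bounded measurable functions F, G : Ω → ℂ, ‖FG‖_{L_{p/2}} ≤ C_α ‖F‖_{L_p(log L)^α} ‖G‖_{L_p(log L)^{−α}}, where ‖H‖_{L_{p/2}} = (∫ |H|^{p/2} dμ)^{2/p}. -/

import Mathlib

/-!
The heart of the matter is the pointwise Young-type inequality
`√(uv) ≤ K (u log^α (e + u) + v log^(-α) (e + v))` with `K = (4α + 1)^(2α)`. If
`v ≤ u log^(2α) (e + v)`, then `√(uv) ≤ u log^α (e + v)`, and taking logarithms gives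
`log (e + v) ≤ log (e + u) + 2α log log (e + v)`, which, as `log y ≤ 2√y`,
forces `log (e + v) ≤ (4α + 1)² log (e + u)`;
otherwise `√(uv) ≤ v log^(-α) (e + v)` directly.
Applied to `u = (|F| / γ)^p`, `v = (|G| / δ)^p` for admissible gauges `γ`, `δ` and integrated,
it gives `∫ |FG|^(p/2) ≤ 2K (γδ)^(p/2)`; raising to the power `2/p` and letting `γ`, `δ` decrease
to the Orlicz norms yields the inequality with `C = (2K)²`.
-/

noncomputable section

open Finset MeasureTheory

universe u

/-- The Orlicz function `ψ(t) = t^p log^α (e + t^p)`. -/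
def psi (p α t : ℝ) : ℝ := t ^ p * Real.log (Real.exp 1 + t ^ p) ^ α

/-- The Orlicz norm `‖f‖_{L_p(log L)^α(E)}` with respect to a measure `μ`. -/
def orliczMeas {Ω : Type*} [MeasurableSpace Ω] (μ : Measure Ω)
    {E : Type*} [NormedAddCommGroup E] (p α : ℝ) (f : Ω → E) : ℝ :=
  sInf {γ : ℝ | 0 < γ ∧ ∫ x, psi p α (‖f x‖ / γ) ∂μ ≤ 1}

open Real

lemma le_mul_csInf_mul_csInf {S T : Set ℝ} (hS : S.Nonempty) (hS' : BddBelow S)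
    (hT : T.Nonempty) (hT' : BddBelow T) {L C : ℝ} (h : ∀ a ∈ S, ∀ b ∈ T, L ≤ C * a * b) :
    L ≤ C * sInf S * sInf T := by
  have hmem : (sInf S, sInf T) ∈ closure (S ×ˢ T) := by
    rw [closure_prod_eq]
    exact ⟨csInf_mem_closure hS hS', csInf_mem_closure hT hT'⟩
  have hclosed : IsClosed {q : ℝ × ℝ | L ≤ C * q.1 * q.2} :=
    isClosed_le continuous_const (by fun_prop)
  exact closure_minimal (fun q hq => h q.1 hq.1 q.2 hq.2) hclosed hmem

lemma one_le_log_exp_one_add {x : ℝ} (hx : 0 ≤ x) : 1 ≤ log (exp 1 + x) := by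
  simpa using log_le_log (exp_pos 1) (le_add_of_nonneg_right hx)

lemma log_exp_one_add_le_of_le_mul {α u v : ℝ} (hα : 0 ≤ α) (hu : 0 ≤ u) (hv : 0 ≤ v)
    (h : v ≤ u * log (exp 1 + v) ^ (2 * α)) :
    log (exp 1 + v) ≤ (4 * α + 1) ^ 2 * log (exp 1 + u) := by
  set Lv := log (exp 1 + v)
  set Lu := log (exp 1 + u)
  have hLv : 1 ≤ Lv := one_le_log_exp_one_add hv
  have hLu : 1 ≤ Lu := one_le_log_exp_one_add hu
  have hLv_le : Lv ≤ Lu + 2 * α * log Lv := by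
    have hpow : 1 ≤ Lv ^ (2 * α) := one_le_rpow hLv (by linarith)
    have : exp 1 + v ≤ (exp 1 + u) * Lv ^ (2 * α) := by nlinarith [exp_pos 1]
    have := log_le_log (by positivity) this
    rwa [log_mul (by positivity) (by positivity), log_rpow (by linarith)] at this
  have hlog_le : log Lv ≤ 2 * √Lv := by
    have := log_le_rpow_div (x := Lv) (by linarith) one_half_pos
    rw [sqrt_eq_rpow]
    linarith
  set s := √Lv
  set t := √Lu
  have hs : s ^ 2 = Lv := sq_sqrt (by linarith)
  have ht : t ^ 2 = Lu := sq_sqrt (by linarith)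
  have ht1 : 1 ≤ t := one_le_sqrt.mpr hLu
  have hquad : s ^ 2 ≤ t ^ 2 + 4 * α * s := by nlinarith
  have hst : s ≤ (4 * α + 1) * t := by
    by_contra! hc
    have hts : t ≤ s := by nlinarith
    have hs0 : 0 < s := by linarith
    nlinarith [mul_lt_mul_of_pos_left hc hs0, mul_le_mul_of_nonneg_left hts (sqrt_nonneg Lu),
      mul_nonneg (sub_nonneg.mpr ht1) (mul_nonneg hα hs0.le)]
  calc Lv = s ^ 2 := hs.symm
    _ ≤ ((4 * α + 1) * t) ^ 2 := by gcongr
    _ = (4 * α + 1) ^ 2 * Lu := by rw [mul_pow, ht]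

lemma sqrt_mul_le_log_young {α u v : ℝ} (hα : 0 ≤ α) (hu : 0 ≤ u) (hv : 0 ≤ v) :
    √(u * v) ≤ ((4 * α + 1) ^ 2) ^ α *
      (u * log (exp 1 + u) ^ α + v * log (exp 1 + v) ^ (-α)) := by
  set K : ℝ := ((4 * α + 1) ^ 2) ^ α
  set Lu := log (exp 1 + u)
  set Lv := log (exp 1 + v)
  have hK : 1 ≤ K := one_le_rpow (by nlinarith) hα
  have hLu : 0 < Lu := one_pos.trans_le (one_le_log_exp_one_add hu)
  have hLv : 0 < Lv := one_pos.trans_le (one_le_log_exp_one_add hv)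
  have hsq (y : ℝ) : (Lv ^ y) ^ 2 = Lv ^ (2 * y) := by
    simpa [mul_comm] using (rpow_mul_natCast hLv.le y 2).symm
  have hU : 0 ≤ u * Lu ^ α := by positivity
  have hV : 0 ≤ v * Lv ^ (-α) := by positivity
  rcases le_or_gt v (u * Lv ^ (2 * α)) with h | h
  · have hsqrt : √(u * v) ≤ u * Lv ^ α := by
      rw [sqrt_le_left (by positivity), mul_pow, hsq]
      nlinarith
    have hLv_le : Lv ^ α ≤ K * Lu ^ α := by
      rw [← mul_rpow (by positivity) hLu.le]
      exact rpow_le_rpow hLv.le (log_exp_one_add_le_of_le_mul hα hu hv h) hα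
    calc √(u * v) ≤ u * (K * Lu ^ α) := hsqrt.trans (by gcongr)
      _ ≤ K * (u * Lu ^ α + v * Lv ^ (-α)) := by nlinarith
  · have hu_le : u ≤ v * Lv ^ (2 * -α) := by
      rw [mul_neg, rpow_neg hLv.le, ← div_eq_mul_inv, le_div_iff₀ (by positivity)]
      exact h.le
    calc √(u * v) ≤ v * Lv ^ (-α) := by
          rw [sqrt_le_left hV, mul_pow, hsq]
          nlinarith
      _ ≤ K * (u * Lu ^ α + v * Lv ^ (-α)) := by nlinarith

lemma mul_rpow_half_le_psi_add_psi {α p s t : ℝ} (hα : 0 ≤ α) (hs : 0 ≤ s) (ht : 0 ≤ t) :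
    (s * t) ^ (p / 2) ≤ ((4 * α + 1) ^ 2) ^ α * (psi p α s + psi p (-α) t) := by
  have : (s * t) ^ (p / 2) = √(s ^ p * t ^ p) := by
    rw [sqrt_eq_rpow, ← mul_rpow hs ht, ← rpow_mul (by positivity)]
    ring_nf
  rw [this]
  exact sqrt_mul_le_log_young hα (rpow_nonneg hs p) (rpow_nonneg ht p)

lemma psi_nonneg (p β : ℝ) {t : ℝ} (ht : 0 ≤ t) : 0 ≤ psi p β t := by
  have := one_le_log_exp_one_add (rpow_nonneg ht p)
  unfold psi
  positivity

lemma rpow_le_max_rpow_one {x y β : ℝ} (hx : 1 ≤ x) (hxy : x ≤ y) : x ^ β ≤ max (y ^ β) 1 := by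
  rcases le_total 0 β with hβ | hβ
  · exact le_max_of_le_left (rpow_le_rpow (by linarith) hxy hβ)
  · exact le_max_of_le_right (rpow_le_one_of_one_le_of_nonpos hx hβ)

lemma psi_le_of_le {p β t T : ℝ} (hp : 0 ≤ p) (ht : 0 ≤ t) (htT : t ≤ T) :
    psi p β t ≤ t ^ p * max (log (exp 1 + T ^ p) ^ β) 1 := by
  have htp : t ^ p ≤ T ^ p := rpow_le_rpow ht htT hp
  unfold psi
  gcongr
  exact rpow_le_max_rpow_one (one_le_log_exp_one_add (rpow_nonneg ht p))
    (log_le_log (by positivity) (by linarith))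

lemma measurable_psi (p β : ℝ) : Measurable (psi p β) := by
  unfold psi
  fun_prop

section Orlicz

variable {Ω : Type*} [MeasurableSpace Ω] {μ : Measure Ω} {E : Type*} [NormedAddCommGroup E]

def orliczAdmissible (μ : Measure Ω) (p α : ℝ) (f : Ω → E) : Set ℝ :=
  {γ : ℝ | 0 < γ ∧ ∫ x, psi p α (‖f x‖ / γ) ∂μ ≤ 1}

lemma bddBelow_orliczAdmissible (μ : Measure Ω) (p α : ℝ) (f : Ω → E) :
    BddBelow (orliczAdmissible μ p α f) :=
  ⟨0, fun _ hγ => hγ.1.le⟩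

lemma orliczMeas_eq_sInf (μ : Measure Ω) (p α : ℝ) (f : Ω → E) :
    orliczMeas μ p α f = sInf (orliczAdmissible μ p α f) := rfl

lemma integrable_psi_norm_div [IsFiniteMeasure μ] {f : Ω → E} (hf : AEStronglyMeasurable f μ)
    {M : ℝ} (hM : ∀ x, ‖f x‖ ≤ M) {p : ℝ} (hp : 0 ≤ p) (β : ℝ) {γ : ℝ} (hγ : 0 < γ) :
    Integrable (fun x => psi p β (‖f x‖ / γ)) μ := by
  refine .of_bound ((measurable_psi p β).comp_aemeasurable
    (hf.norm.aemeasurable.div_const γ)).aestronglyMeasurable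
    ((M / γ) ^ p * max (log (exp 1 + (M / γ) ^ p) ^ β) 1) (.of_forall fun x => ?_)
  have ht : 0 ≤ ‖f x‖ / γ := by positivity
  have htM : ‖f x‖ / γ ≤ M / γ := by gcongr; exact hM x
  rw [norm_of_nonneg (psi_nonneg p β ht)]
  exact (psi_le_of_le hp ht htM).trans (by gcongr)

lemma orliczAdmissible_nonempty [IsProbabilityMeasure μ] {f : Ω → E}
    (hf : AEStronglyMeasurable f μ) {M : ℝ} (hM : ∀ x, ‖f x‖ ≤ M) {p : ℝ} (hp : 1 ≤ p)
    (β : ℝ) : (orliczAdmissible μ p β f).Nonempty := by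
  set c : ℝ := max (log (exp 1 + 1) ^ β) 1
  have hc : 1 ≤ c := le_max_right _ _
  set γ : ℝ := (|M| + 1) * c
  have hγ : 0 < γ := by positivity
  have hpsi (x : Ω) : psi p β (‖f x‖ / γ) ≤ 1 := by
    set t := ‖f x‖ / γ
    have ht : 0 ≤ t := by positivity
    have htc : t * c ≤ 1 := by
      rw [div_mul_eq_mul_div, div_le_one hγ]
      show ‖f x‖ * c ≤ (|M| + 1) * c
      gcongr
      exact (hM x).trans ((le_abs_self M).trans (by linarith))
    have ht1 : t ≤ 1 := by nlinarith
    calc psi p β t ≤ t ^ p * c := by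
          simpa only [one_rpow] using psi_le_of_le (β := β) (by linarith) ht ht1
      _ ≤ t * c := by gcongr; exact rpow_le_self_of_le_one ht ht1 hp
      _ ≤ 1 := htc
  refine ⟨γ, hγ, ?_⟩
  calc ∫ x, psi p β (‖f x‖ / γ) ∂μ ≤ ∫ _, (1 : ℝ) ∂μ :=
        integral_mono (integrable_psi_norm_div hf hM (by linarith) β hγ) (integrable_const 1) hpsi
    _ = 1 := by simp

variable {𝕜 : Type*} [NormedDivisionRing 𝕜] [IsFiniteMeasure μ] {F G : Ω → 𝕜} {MF MG : ℝ}
  {α p γF γG : ℝ}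

lemma integral_norm_mul_rpow_le (hα : 0 ≤ α) (hp : 0 ≤ p)
    (hF : AEStronglyMeasurable F μ) (hMF : ∀ x, ‖F x‖ ≤ MF)
    (hG : AEStronglyMeasurable G μ) (hMG : ∀ x, ‖G x‖ ≤ MG)
    (hγF : γF ∈ orliczAdmissible μ p α F) (hγG : γG ∈ orliczAdmissible μ p (-α) G) :
    ∫ x, ‖F x * G x‖ ^ (p / 2) ∂μ ≤ (γF * γG) ^ (p / 2) * (2 * ((4 * α + 1) ^ 2) ^ α) := by
  obtain ⟨hγF, hF1⟩ := hγF
  obtain ⟨hγG, hG1⟩ := hγG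
  set K : ℝ := ((4 * α + 1) ^ 2) ^ α
  set ψF := fun x => psi p α (‖F x‖ / γF)
  set ψG := fun x => psi p (-α) (‖G x‖ / γG)
  have hψF : Integrable ψF μ := integrable_psi_norm_div hF hMF hp α hγF
  have hψG : Integrable ψG μ := integrable_psi_norm_div hG hMG hp (-α) hγG
  have hpointwise (x : Ω) :
      ‖F x * G x‖ ^ (p / 2) ≤ (γF * γG) ^ (p / 2) * (K * (ψF x + ψG x)) := by
    have : ‖F x * G x‖ = γF * γG * (‖F x‖ / γF * (‖G x‖ / γG)) := by
      rw [norm_mul]; field_simp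
    rw [this, mul_rpow (by positivity) (by positivity)]
    gcongr
    exact mul_rpow_half_le_psi_add_psi hα (by positivity) (by positivity)
  calc ∫ x, ‖F x * G x‖ ^ (p / 2) ∂μ
      ≤ ∫ x, (γF * γG) ^ (p / 2) * (K * (ψF x + ψG x)) ∂μ :=
        integral_mono_of_nonneg (.of_forall fun x => by positivity)
          (((hψF.add hψG).const_mul K).const_mul _) (.of_forall hpointwise)
    _ = (γF * γG) ^ (p / 2) * (K * (∫ x, ψF x ∂μ + ∫ x, ψG x ∂μ)) := by
        rw [integral_const_mul, integral_const_mul, integral_add hψF hψG]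
    _ ≤ (γF * γG) ^ (p / 2) * (K * 2) := by gcongr; linarith
    _ = (γF * γG) ^ (p / 2) * (2 * K) := by rw [mul_comm K]

lemma rpow_two_div_integral_norm_mul_le (hα : 0 ≤ α) (hp : 1 ≤ p)
    (hF : AEStronglyMeasurable F μ) (hMF : ∀ x, ‖F x‖ ≤ MF)
    (hG : AEStronglyMeasurable G μ) (hMG : ∀ x, ‖G x‖ ≤ MG)
    (hγF : γF ∈ orliczAdmissible μ p α F) (hγG : γG ∈ orliczAdmissible μ p (-α) G) :
    (∫ x, ‖F x * G x‖ ^ (p / 2) ∂μ) ^ (2 / p) ≤ (2 * ((4 * α + 1) ^ 2) ^ α) ^ 2 * γF * γG := by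
  set K : ℝ := ((4 * α + 1) ^ 2) ^ α
  have hK : 1 ≤ K := one_le_rpow (by nlinarith) hα
  have hγ : 0 < γF * γG := mul_pos hγF.1 hγG.1
  calc (∫ x, ‖F x * G x‖ ^ (p / 2) ∂μ) ^ (2 / p)
      ≤ ((γF * γG) ^ (p / 2) * (2 * K)) ^ (2 / p) := by
        gcongr
        exact integral_norm_mul_rpow_le hα (by linarith) hF hMF hG hMG hγF hγG
    _ = γF * γG * (2 * K) ^ (2 / p) := by
        have : p / 2 * (2 / p) = 1 := by field_simp
        rw [mul_rpow (by positivity) (by positivity), ← rpow_mul hγ.le, this, rpow_one]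
    _ ≤ γF * γG * (2 * K) ^ (2 : ℝ) := by
        gcongr
        · linarith
        · exact div_le_self zero_le_two hp
    _ = (2 * K) ^ 2 * γF * γG := by rw [rpow_two]; ring

end Orlicz

/-- **Hölder's inequality (5.19) for Orlicz spaces**:
`‖FG‖_{L_{p/2}} ≤ C_α ‖F‖_{L_p(log L)^α} ‖G‖_{L_p(log L)^{-α}}`. -/
theorem stmt17 (α : ℝ) (hα : 0 < α) :
    ∃ C : ℝ, 0 < C ∧ ∀ (p : ℝ), 1 ≤ p →
      ∀ (Ω : Type u) (mΩ : MeasurableSpace Ω) (μ : Measure Ω), IsProbabilityMeasure μ →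
      ∀ (F G : Ω → ℂ), StronglyMeasurable F → (∃ M, ∀ x, ‖F x‖ ≤ M) →
        StronglyMeasurable G → (∃ M, ∀ x, ‖G x‖ ≤ M) →
        (∫ x, ‖F x * G x‖ ^ (p / 2) ∂μ) ^ (2 / p) ≤
          C * orliczMeas μ p α F * orliczMeas μ p (-α) G := by
  refine ⟨(2 * ((4 * α + 1) ^ 2) ^ α) ^ 2, by positivity, ?_⟩
  intro p hp Ω _ μ _ F G hF ⟨MF, hMF⟩ hG ⟨MG, hMG⟩
  rw [orliczMeas_eq_sInf, orliczMeas_eq_sInf]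
  refine le_mul_csInf_mul_csInf
    (orliczAdmissible_nonempty hF.aestronglyMeasurable hMF hp α) (bddBelow_orliczAdmissible ..)
    (orliczAdmissible_nonempty hG.aestronglyMeasurable hMG hp (-α)) (bddBelow_orliczAdmissible ..)
    fun γF hγF γG hγG => ?_
  exact rpow_two_div_integral_norm_mul_le hα.le hp
    hF.aestronglyMeasurable hMF hG.aestronglyMeasurable hMG hγF hγG
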